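/- Fix a real x > 0 and c > 0, and for each h > 0 let K_h be a random variable with the beta-negative-binomial distribution BNB(x, cπ(h), c(1−π(h))). Then for every integer k ≥ 1, P(K_h = k) = c·[Γ(x+k)/(Γ(x)·k!)]·[Γ(k)·Γ(x+c)/Γ(x+k+c)]·r(t)·h + o(h) as h → 0+. -/

import Mathlib

open scoped BigOperators
open Filter Topology Asymptotics

/-- The Beta function `B(a,b) = Γ(a)Γ(b)/Γ(a+b)`. -/
noncomputable def betaFn (a b : ℝ) : ℝ := Real.Gamma a * Real.Gamma b / Real.Gamma (a + b)

/-- The pmf of the beta-negative-binomial distribution `BNB(x, α, β)`, obtained by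
integrating the conditional pmf `P(K = k | Π) = [Γ(x+k)/(Γ(x)k!)]·Π^k(1−Π)^x` against
`Π ~ Beta(α,β)`: `P(K = k) = [Γ(x+k)/(Γ(x)k!)]·B(k+α, x+β)/B(α,β)`. -/
noncomputable def bnbPmf (x α β : ℝ) (k : ℕ) : ℝ :=
  Real.Gamma (x + (k : ℝ)) / (Real.Gamma x * (k.factorial : ℝ)) *
    (betaFn ((k : ℝ) + α) (x + β) / betaFn α β)

/-- `π(h) = 1 − exp(−∫_t^{t+h} r(s) ds)`. -/
noncomputable def pih (r : ℝ → ℝ) (t h : ℝ) : ℝ :=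
  1 - Real.exp (-(∫ s in t..(t + h), r s))

/-! Since `1/B(cp, c(1-p)) = cp·Γ(c)/(Γ(cp+1)Γ(c(1-p)))`, the mass `P(K = k)` of
`BNB(x, cp, c(1-p))` is `p·S(p)` with `S = bnbSlope x c k` continuous at `0`; hence it has
derivative `S(0)` in `p` at `p = 0`. As `π(0) = 0` and `π'(0) = r(t)`, the chain rule gives
`h ↦ P(K_h = k)` the derivative `S(0)·r(t)` at `h = 0`, and `S(0)` is the claimed constant. -/

theorem hasDerivAt_sub_smul_of_continuousAt {𝕜 F : Type*} [NontriviallyNormedField 𝕜]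
    [NormedAddCommGroup F] [NormedSpace 𝕜 F] {g : 𝕜 → F} {a : 𝕜} (hg : ContinuousAt g a) :
    HasDerivAt (fun y => (y - a) • g y) (g a) a := by
  rw [hasDerivAt_iff_tendsto_slope]
  refine (hg.tendsto.mono_left nhdsWithin_le_nhds).congr' ?_
  filter_upwards [self_mem_nhdsWithin] with y (hy : y ≠ a)
  simp [slope, smul_smul, inv_mul_cancel₀ (sub_ne_zero.mpr hy)]

theorem ContinuousAt.Gamma_of_pos {α : Type*} [TopologicalSpace α] {f : α → ℝ} {a : α}
    (hf : ContinuousAt f a) (ha : 0 < f a) : ContinuousAt (fun y => Real.Gamma (f y)) a :=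
  (Real.differentiableOn_Gamma_Ioi.continuousOn.continuousAt (Ioi_mem_nhds ha)).comp hf

theorem ContinuousAt.betaFn_of_pos {α : Type*} [TopologicalSpace α] {f g : α → ℝ} {a : α}
    (hf : ContinuousAt f a) (hg : ContinuousAt g a) (hfa : 0 < f a) (hga : 0 < g a) :
    ContinuousAt (fun y => betaFn (f y) (g y)) a :=
  ((hf.Gamma_of_pos hfa).mul (hg.Gamma_of_pos hga)).div ((hf.add hg).Gamma_of_pos
    (add_pos hfa hga)) (Real.Gamma_pos_of_pos (add_pos hfa hga)).ne'

theorem betaFn_eq_Gamma_add_one_div (a b : ℝ) :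
    betaFn a b = Real.Gamma (a + 1) * Real.Gamma b / (a * Real.Gamma (a + b)) := by
  rcases eq_or_ne a 0 with rfl | ha
  · simp [betaFn]
  · rw [betaFn, Real.Gamma_add_one ha]
    field_simp

/-- `p ↦ P(K = k)/p` for `K ~ BNB(x, cp, c(1-p))`. -/
noncomputable def bnbSlope (x c : ℝ) (k : ℕ) (p : ℝ) : ℝ :=
  Real.Gamma (x + k) / (Real.Gamma x * k.factorial) *
    (c * Real.Gamma c * betaFn (k + c * p) (x + c * (1 - p)) /
      (Real.Gamma (c * p + 1) * Real.Gamma (c * (1 - p))))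

/-- At `c * p = 0` both sides vanish, by the conventions `Γ 0 = 0` and `x / 0 = 0`. -/
theorem bnbPmf_eq_mul_bnbSlope (x c : ℝ) (k : ℕ) (p : ℝ) :
    bnbPmf x (c * p) (c * (1 - p)) k = p * bnbSlope x c k p := by
  rw [bnbPmf, bnbSlope, betaFn_eq_Gamma_add_one_div (c * p), div_div_eq_mul_div,
    show c * p + c * (1 - p) = c by ring]
  ring

theorem continuousAt_bnbSlope {x c : ℝ} {k : ℕ} (hk : k ≠ 0) (hc : 0 < c) (hxc : 0 < x + c) :
    ContinuousAt (bnbSlope x c k) 0 := by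
  have hk' : (0 : ℝ) < k := by positivity
  refine continuousAt_const.mul (ContinuousAt.div ?_ ?_ ?_)
  · exact continuousAt_const.mul <| ContinuousAt.betaFn_of_pos (by fun_prop) (by fun_prop)
      (by simpa using hk') (by simpa using hxc)
  · exact ((by fun_prop : ContinuousAt (fun p : ℝ => c * p + 1) 0).Gamma_of_pos (by simp)).mul
      ((by fun_prop : ContinuousAt (fun p : ℝ => c * (1 - p)) 0).Gamma_of_pos (by simpa using hc))
  · simp [(Real.Gamma_pos_of_pos hc).ne']

theorem bnbSlope_zero {c : ℝ} (hc : 0 < c) (x : ℝ) (k : ℕ) :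
    bnbSlope x c k 0 = c * (Real.Gamma (x + k) / (Real.Gamma x * k.factorial)) *
      (Real.Gamma k * Real.Gamma (x + c) / Real.Gamma (x + k + c)) := by
  have hΓc := (Real.Gamma_pos_of_pos hc).ne'
  rw [bnbSlope, betaFn, show (k : ℝ) + c * 0 + (x + c * (1 - 0)) = x + k + c by ring]
  field_simp
  simp

theorem pih_zero (r : ℝ → ℝ) (t : ℝ) : pih r t 0 = 0 := by
  simp [pih]

theorem hasDerivAt_pih {r : ℝ → ℝ} (hr : Continuous r) (t : ℝ) :
    HasDerivAt (pih r t) (r t) 0 := by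
  have hI : HasDerivAt (fun h => ∫ s in t..(t + h), r s) (r t) 0 :=
    HasDerivAt.comp_const_add t 0 (by simpa using (hr.integral_hasStrictDerivAt t t).hasDerivAt)
  exact ((hI.neg.exp).const_sub 1).congr_deriv (by simp)

theorem bnb_transition_rate_general
    (r : ℝ → ℝ) (hr_cont : Continuous r)
    (t c : ℝ) (hc : 0 < c) (x : ℝ) (hx : 0 < x) (k : ℕ) (hk : 1 ≤ k) :
    (fun h : ℝ => bnbPmf x (c * pih r t h) (c * (1 - pih r t h)) k
        - c * (Real.Gamma (x + (k : ℝ)) / (Real.Gamma x * (k.factorial : ℝ))) *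
            (Real.Gamma (k : ℝ) * Real.Gamma (x + c) / Real.Gamma (x + (k : ℝ) + c))
            * r t * h)
      =o[𝓝[>] (0 : ℝ)] (fun h => h) := by
  have hslope : HasDerivAt (fun p => p * bnbSlope x c k p) (bnbSlope x c k 0) 0 := by
    simpa using hasDerivAt_sub_smul_of_continuousAt
      (continuousAt_bnbSlope (by omega) hc (by linarith))
  have hd : HasDerivAt (fun h => pih r t h * bnbSlope x c k (pih r t h))
      (bnbSlope x c k 0 * r t) 0 :=
    hslope.comp_of_eq 0 (hasDerivAt_pih hr_cont t) (pih_zero r t).symm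
  simp_rw [bnbPmf_eq_mul_bnbSlope]
  simpa [pih_zero, bnbSlope_zero hc, mul_comm, mul_left_comm, mul_assoc] using
    (hasDerivAt_iff_isLittleO.mp hd).mono nhdsWithin_le_nhds

/-- for `x > 0`, `c > 0`, `K_h ~ BNB(x, cπ(h), c(1−π(h)))` and every
integer `k ≥ 1`,
`P(K_h = k) = c·[Γ(x+k)/(Γ(x)k!)]·[Γ(k)Γ(x+c)/Γ(x+k+c)]·r(t)·h + o(h)` as `h → 0+`. -/
theorem bnb_transition_rate
    (r : ℝ → ℝ) (hr_cont : Continuous r) (hr_pos : ∀ s, 0 < r s)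
    (t c : ℝ) (hc : 0 < c) (x : ℝ) (hx : 0 < x) (k : ℕ) (hk : 1 ≤ k) :
    (fun h : ℝ => bnbPmf x (c * pih r t h) (c * (1 - pih r t h)) k
        - c * (Real.Gamma (x + (k : ℝ)) / (Real.Gamma x * (k.factorial : ℝ))) *
            (Real.Gamma (k : ℝ) * Real.Gamma (x + c) / Real.Gamma (x + (k : ℝ) + c))
            * r t * h)
      =o[𝓝[>] (0 : ℝ)] (fun h => h) :=
  bnb_transition_rate_general r hr_cont t c hc x hx k hk
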